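/- Let b > d ≥ 0, set r = b − d > 0, let p ∈ (0,1) with b(1−p) ≠ d, set b_p = b(1−p), r_p = b(1−p) − d and W_p(u) = (b_p e^{r_p u} − d)/r_p. Then (r p/(1−p)) ∫_0^∞ e^{−r u} ln(W_p(u)) du = (r − r_p) ∫_0^∞ e^{−(r − r_p) u} / W_p(u) du, where r − r_p = b p. -/

import Mathlib

/-! Integrating by parts against `e^{-ru}` gives
`r ∫ e^{-ru} log W = log W(0) + ∫ e^{-ru} W'/W`; the boundary term at infinity vanishes because
`e^{-ru} log W` and its derivative are both integrable. For the scale function `W = W_p` one has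
`W(0) = 1` and `e^{-ru} W'(u) = b_p e^{-(r - r_p) u}`, and
`(r p / (1 - p)) · b_p / r = b p = r - r_p`. -/

open MeasureTheory Set Filter Real

theorem mul_integral_exp_neg_mul_eq_add {r : ℝ} {f f' : ℝ → ℝ}
    (hf : ∀ u ∈ Ici (0 : ℝ), HasDerivAt f (f' u) u)
    (hint : IntegrableOn (fun u => exp (-(r * u)) * f u) (Ioi 0))
    (hint' : IntegrableOn (fun u => exp (-(r * u)) * f' u) (Ioi 0)) :
    r * ∫ u in Ioi 0, exp (-(r * u)) * f u = f 0 + ∫ u in Ioi 0, exp (-(r * u)) * f' u := by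
  let g : ℝ → ℝ := fun u => exp (-(r * u)) * f u
  have hg : ∀ u ∈ Ici (0 : ℝ), HasDerivAt g (exp (-(r * u)) * f' u - r * g u) u := by
    intro u hu
    have hexp : HasDerivAt (fun u => exp (-(r * u))) (exp (-(r * u)) * -r) u := by
      simpa using ((hasDerivAt_id u).const_mul r).neg.exp
    exact (hexp.mul (hf u hu)).congr_deriv (by ring)
  have hg'int := hint'.sub (hint.const_mul r)
  have htend : Tendsto g atTop (nhds 0) :=
    tendsto_zero_of_hasDerivAt_of_integrableOn_Ioi (fun u hu => hg u (mem_Ici_of_Ioi hu))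
      hg'int hint
  have hFTC := integral_Ioi_of_hasDerivAt_of_tendsto' hg hg'int htend
  rw [integral_sub hint' (hint.const_mul r), integral_const_mul] at hFTC
  simp only [g, mul_zero, neg_zero, exp_zero, one_mul] at hFTC
  linarith

theorem div_nonneg_of_exp_mul_sub_one {ρ u : ℝ} (hu : 0 ≤ u) :
    0 ≤ (exp (ρ * u) - 1) / ρ := by
  rcases le_or_gt ρ 0 with hρ | hρ
  · have : exp (ρ * u) ≤ 1 := exp_le_one_iff.mpr (mul_nonpos_of_nonpos_of_nonneg hρ hu)
    exact div_nonneg_of_nonpos (by linarith) hρ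
  · have : 1 ≤ exp (ρ * u) := one_le_exp (mul_nonneg hρ.le hu)
    exact div_nonneg (by linarith) hρ.le

theorem integrableOn_exp_neg_mul_Ioi {c : ℝ} (hc : 0 < c) :
    IntegrableOn (fun u => exp (-(c * u))) (Ioi 0) := by
  simpa only [neg_mul] using exp_neg_integrableOn_Ioi 0 hc

-- `W_p = birthDeathScale b_p d`, the scale function of the birth-death process with rates
-- `b_p`, `d`.
noncomputable def birthDeathScale (β δ u : ℝ) : ℝ :=
  (β * exp ((β - δ) * u) - δ) / (β - δ)

section birthDeathScale

variable {β δ : ℝ}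

theorem continuous_birthDeathScale : Continuous (birthDeathScale β δ) := by
  unfold birthDeathScale
  fun_prop

theorem birthDeathScale_zero (h : β ≠ δ) : birthDeathScale β δ 0 = 1 := by
  simp [birthDeathScale, sub_ne_zero.mpr h]

theorem hasDerivAt_birthDeathScale (h : β ≠ δ) (u : ℝ) :
    HasDerivAt (birthDeathScale β δ) (β * exp ((β - δ) * u)) u := by
  have hexp := (((hasDerivAt_id' u).const_mul (β - δ)).exp.const_mul β).sub_const δ
  refine (hexp.div_const (β - δ)).congr_deriv ?_
  field_simp [sub_ne_zero.mpr h]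

theorem birthDeathScale_sub_one (h : β ≠ δ) (u : ℝ) :
    birthDeathScale β δ u - 1 = β * ((exp ((β - δ) * u) - 1) / (β - δ)) := by
  unfold birthDeathScale
  field_simp [sub_ne_zero.mpr h]
  ring

theorem one_le_birthDeathScale (hβ : 0 ≤ β) (h : β ≠ δ) {u : ℝ} (hu : 0 ≤ u) :
    1 ≤ birthDeathScale β δ u := by
  have := mul_nonneg hβ (div_nonneg_of_exp_mul_sub_one (ρ := β - δ) hu)
  linarith [birthDeathScale_sub_one h u]

theorem birthDeathScale_le (u : ℝ) :
    birthDeathScale β δ u ≤ |β / (β - δ)| * exp ((β - δ) * u) + |δ / (β - δ)| := by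
  have hβ : β / (β - δ) * exp ((β - δ) * u) ≤ |β / (β - δ)| * exp ((β - δ) * u) :=
    mul_le_mul_of_nonneg_right (le_abs_self _) (exp_pos _).le
  have hδ : -(δ / (β - δ)) ≤ |δ / (β - δ)| := neg_le_abs _
  calc birthDeathScale β δ u = β / (β - δ) * exp ((β - δ) * u) + -(δ / (β - δ)) := by
        unfold birthDeathScale; ring
    _ ≤ _ := add_le_add hβ hδ

theorem integrableOn_exp_neg_mul_div_birthDeathScale (hβ : 0 ≤ β) (h : β ≠ δ) {c : ℝ}
    (hc : 0 < c) :
    IntegrableOn (fun u => exp (-(c * u)) / birthDeathScale β δ u) (Ioi 0) := by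
  have hW := continuous_birthDeathScale (β := β) (δ := δ)
  refine (integrableOn_exp_neg_mul_Ioi hc).mono'
    (Measurable.aestronglyMeasurable (by fun_prop)) ?_
  filter_upwards [ae_restrict_mem measurableSet_Ioi] with u hu
  have h1 := one_le_birthDeathScale hβ h (le_of_lt hu)
  rw [norm_of_nonneg (div_nonneg (exp_pos _).le (by linarith))]
  exact div_le_self (exp_pos _).le h1

theorem integrableOn_exp_neg_mul_mul_log_birthDeathScale (hβ : 0 ≤ β) (h : β ≠ δ) {r : ℝ}
    (hr : 0 < r) (hρ : β - δ < r) :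
    IntegrableOn (fun u => exp (-(r * u)) * log (birthDeathScale β δ u)) (Ioi 0) := by
  have hW := continuous_birthDeathScale (β := β) (δ := δ)
  have hbound := ((integrableOn_exp_neg_mul_Ioi (sub_pos.mpr hρ)).const_mul |β / (β - δ)|).add
    ((integrableOn_exp_neg_mul_Ioi hr).const_mul |δ / (β - δ)|)
  refine hbound.mono' (Measurable.aestronglyMeasurable (by fun_prop)) ?_
  filter_upwards [ae_restrict_mem measurableSet_Ioi] with u hu
  have h1 := one_le_birthDeathScale hβ h (le_of_lt hu)
  have hexp : exp (-(r * u)) * exp ((β - δ) * u) = exp (-((r - (β - δ)) * u)) := by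
    rw [← exp_add]; ring_nf
  rw [norm_of_nonneg (mul_nonneg (exp_pos _).le (log_nonneg h1))]
  calc exp (-(r * u)) * log (birthDeathScale β δ u)
      ≤ exp (-(r * u)) * (|β / (β - δ)| * exp ((β - δ) * u) + |δ / (β - δ)|) := by
        gcongr
        exact (log_le_self (by linarith)).trans (birthDeathScale_le u)
    _ = _ := by rw [Pi.add_apply, ← hexp]; ring

theorem mul_integral_exp_neg_mul_mul_log_birthDeathScale (hβ : 0 ≤ β) (h : β ≠ δ) {r : ℝ}
    (hr : 0 < r) (hρ : β - δ < r) :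
    r * ∫ u in Ioi 0, exp (-(r * u)) * log (birthDeathScale β δ u)
      = β * ∫ u in Ioi 0, exp (-((r - (β - δ)) * u)) / birthDeathScale β δ u := by
  have hpos : ∀ u ∈ Ici (0 : ℝ), birthDeathScale β δ u ≠ 0 := fun u hu =>
    (zero_lt_one.trans_le (one_le_birthDeathScale hβ h hu)).ne'
  have hlogDeriv : ∀ u ∈ Ici (0 : ℝ), HasDerivAt (fun u => log (birthDeathScale β δ u))
      (β * exp ((β - δ) * u) / birthDeathScale β δ u) u := fun u hu =>
    (hasDerivAt_birthDeathScale h u).log (hpos u hu)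
  have hintegrand : (fun u => exp (-(r * u)) * (β * exp ((β - δ) * u) / birthDeathScale β δ u))
      = fun u => β * (exp (-((r - (β - δ)) * u)) / birthDeathScale β δ u) := by
    ext u
    rw [mul_div_assoc', mul_left_comm, ← exp_add]
    ring_nf
  have hint' := (integrableOn_exp_neg_mul_div_birthDeathScale hβ h (sub_pos.mpr hρ)).const_mul β
  rw [← hintegrand] at hint'
  rw [mul_integral_exp_neg_mul_eq_add hlogDeriv
    (integrableOn_exp_neg_mul_mul_log_birthDeathScale hβ h hr hρ) hint', hintegrand,
    integral_const_mul, birthDeathScale_zero h, log_one, zero_add]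

end birthDeathScale

theorem two_expressions_for_J_model_I_exponential_case
    (b d p : ℝ) (hd : 0 ≤ d) (hbd : d < b) (hp : p ∈ Set.Ioo (0:ℝ) 1)
    (hne : b * (1 - p) ≠ d)
    (r bp rp : ℝ) (hr : r = b - d) (hbp : bp = b * (1 - p))
    (hrp : rp = b * (1 - p) - d)
    (Wp : ℝ → ℝ)
    (hWp : ∀ u : ℝ, Wp u = (bp * Real.exp (rp * u) - d) / rp) :
    (r * p / (1 - p)) *
        (∫ u in Ioi (0:ℝ), Real.exp (-(r * u)) * Real.log (Wp u))
      = (r - rp) * (∫ u in Ioi (0:ℝ), Real.exp (-((r - rp) * u)) / Wp u) ∧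
    r - rp = b * p := by
  obtain ⟨hp0, hp1⟩ := hp
  have hb : 0 < b := hd.trans_lt hbd
  have hbp0 : 0 ≤ bp := by rw [hbp]; nlinarith
  have hrp_eq : rp = bp - d := by rw [hrp, hbp]
  have hrrp : r - rp = b * p := by rw [hr, hrp]; ring
  have hW : Wp = birthDeathScale bp d := funext fun u => by rw [hWp, hrp_eq]; rfl
  subst hW hrp_eq
  refine ⟨?_, hrrp⟩
  have hJ := mul_integral_exp_neg_mul_mul_log_birthDeathScale hbp0 (hbp ▸ hne)
    (r := r) (by linarith) (by rw [← sub_pos, hrrp]; positivity)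
  calc r * p / (1 - p) * ∫ u in Ioi 0, exp (-(r * u)) * log (birthDeathScale bp d u)
      = p / (1 - p) *
          (bp * ∫ u in Ioi 0, exp (-((r - (bp - d)) * u)) / birthDeathScale bp d u) := by
        rw [← hJ]; ring
    _ = _ := by rw [hrrp, hbp]; field_simp [(by linarith : (1 - p) ≠ 0)]
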